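/- Every nonzero eigenvalue of the operator u ↦ -u'''' on (-1/2, 1/2) with boundary conditions u'(±1/2) = u'''(±1/2) = 0 satisfies λ ≤ -π⁴; i.e., if u is a nonzero C⁴ function with u'''' = -λ u, u'(±1/2) = u'''(±1/2) = 0, and λ ≠ 0, then λ ≤ -π⁴. -/

import Mathlib

/-!
Multiplying `u'''' = -λ u` by `u` and integrating by parts twice gives `-λ ∫ u² = ∫ (u'')²`,
so `λ < 0`; write `-λ = k⁴` with `k > 0`. Then `p = u''' + k² u'` solves `p'' = k² p` and
vanishes at both ends, and `v = u'` solves `v'' = -k² v`, again with zero boundary values.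
A Wronskian argument shows that a Dirichlet solution of `y'' = q y` vanishes identically as
soon as the same equation has a solution positive on the closed interval. With `cosh (k x)`
this kills `p`; if `k < π`, then `cos (k x)` is positive on `[-1/2, 1/2]` and kills `u'`, so
`u` would be a constant eigenfunction with `λ ≠ 0`, which is impossible. Hence `k ≥ π`.
-/

open Real Set

section Calculus

variable {a b : ℝ}

theorem hasDerivAt_iteratedDeriv {u : ℝ → ℝ} {N : WithTop ℕ∞} {n : ℕ}
    (hu : ContDiff ℝ N u) (hn : (n : WithTop ℕ∞) < N) (x : ℝ) :
    HasDerivAt (iteratedDeriv n u) (iteratedDeriv (n + 1) u x) x := by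
  rw [iteratedDeriv_succ]
  exact (hu.differentiable_iteratedDeriv n hn x).hasDerivAt

theorem eq_of_hasDerivAt_zero_on_Icc {g : ℝ → ℝ} (hg : ∀ x ∈ Icc a b, HasDerivAt g 0 x) :
    ∀ x ∈ Icc a b, g x = g a :=
  constant_of_has_deriv_right_zero (fun x hx => (hg x hx).continuousAt.continuousWithinAt)
    fun x hx => (hg x (Ico_subset_Icc_self hx)).hasDerivWithinAt

/-- The Wronskian `W = f' φ - f φ'` is constant and `(f / φ)' = W / φ²`; Rolle's theorem
applied to `f / φ` forces `W = 0`, hence `f / φ` is constant, equal to its boundary value. -/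
theorem eq_zero_of_dirichlet_of_pos_solution {q f f' φ φ' : ℝ → ℝ}
    (hf : ∀ x ∈ Icc a b, HasDerivAt f (f' x) x)
    (hf' : ∀ x ∈ Icc a b, HasDerivAt f' (q x * f x) x)
    (hφ : ∀ x ∈ Icc a b, HasDerivAt φ (φ' x) x)
    (hφ' : ∀ x ∈ Icc a b, HasDerivAt φ' (q x * φ x) x)
    (hφpos : ∀ x ∈ Icc a b, 0 < φ x) (ha : f a = 0) (hb : f b = 0) :
    ∀ x ∈ Icc a b, f x = 0 := by
  rcases le_or_gt b a with hba | hab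
  · intro x hx
    rwa [le_antisymm (hx.2.trans hba) hx.1]
  set W := fun x => f' x * φ x - f x * φ' x
  have hW : ∀ x ∈ Icc a b, HasDerivAt W 0 x := fun x hx =>
    (((hf' x hx).mul (hφ x hx)).sub ((hf x hx).mul (hφ' x hx))).congr_deriv (by ring)
  have hquot : ∀ x ∈ Icc a b, HasDerivAt (fun y => f y / φ y) (W x / φ x ^ 2) x :=
    fun x hx => (hf x hx).div (hφ x hx) (hφpos x hx).ne'
  obtain ⟨c, hc, hquot_c⟩ := exists_hasDerivAt_eq_zero hab
    (fun x hx => (hquot x hx).continuousAt.continuousWithinAt) (by simp [ha, hb])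
    (fun x hx => hquot x (Ioo_subset_Icc_self hx))
  have hc' : c ∈ Icc a b := Ioo_subset_Icc_self hc
  have hW_zero : ∀ x ∈ Icc a b, W x = 0 := fun x hx => by
    have hWc : W c = 0 := by simpa [(hφpos c hc').ne'] using hquot_c
    rw [eq_of_hasDerivAt_zero_on_Icc hW x hx, ← eq_of_hasDerivAt_zero_on_Icc hW c hc', hWc]
  intro x hx
  have hconst := eq_of_hasDerivAt_zero_on_Icc
    (fun y hy => by simpa [hW_zero y hy] using hquot y hy) x hx
  simpa [ha, (hφpos x hx).ne'] using hconst

theorem eq_zero_of_dirichlet_of_mul_lt_pi {v v' : ℝ → ℝ} {k : ℝ} (hk : 0 ≤ k)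
    (hlt : k * (b - a) < π)
    (hv : ∀ x ∈ Icc a b, HasDerivAt v (v' x) x)
    (hv' : ∀ x ∈ Icc a b, HasDerivAt v' (-k ^ 2 * v x) x) (ha : v a = 0) (hb : v b = 0) :
    ∀ x ∈ Icc a b, v x = 0 := by
  set m := (a + b) / 2 with hm
  have hθ : ∀ x, HasDerivAt (fun y => k * (y - m)) k x := fun x => by
    simpa using ((hasDerivAt_id x).sub_const m).const_mul k
  refine eq_zero_of_dirichlet_of_pos_solution hv hv'
    (φ := fun x => cos (k * (x - m))) (φ' := fun x => -k * sin (k * (x - m)))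
    (fun x _ => (hθ x).cos.congr_deriv (by ring))
    (fun x _ => ((hθ x).sin.const_mul (-k)).congr_deriv (by ring))
    (fun x hx => cos_pos_of_mem_Ioo ?_) ha hb
  have h₁ := mul_le_mul_of_nonneg_left (show x - m ≤ (b - a) / 2 by linarith [hx.2]) hk
  have h₂ := mul_le_mul_of_nonneg_left (show -((b - a) / 2) ≤ x - m by linarith [hx.1]) hk
  constructor <;> nlinarith

end Calculus

section Hyperdiffusion

variable {a b : ℝ} {u : ℝ → ℝ}

theorem integral_iteratedDeriv_four_mul_self (hu : ContDiff ℝ 4 u)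
    (h1a : deriv u a = 0) (h1b : deriv u b = 0)
    (h3a : iteratedDeriv 3 u a = 0) (h3b : iteratedDeriv 3 u b = 0) :
    ∫ x in a..b, iteratedDeriv 4 u x * u x = ∫ x in a..b, iteratedDeriv 2 u x ^ 2 := by
  have hD : ∀ n < 4, ∀ x, HasDerivAt (iteratedDeriv n u) (iteratedDeriv (n + 1) u x) x :=
    fun n hn => hasDerivAt_iteratedDeriv hu (by exact_mod_cast hn)
  have hint : ∀ n ≤ 4, IntervalIntegrable (iteratedDeriv n u) MeasureTheory.volume a b :=
    fun n hn => (hu.continuous_iteratedDeriv n (by exact_mod_cast hn)).intervalIntegrable _ _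
  have ibp₁ := intervalIntegral.integral_mul_deriv_eq_deriv_mul (a := a) (b := b)
    (fun x _ => hD 3 (by norm_num) x) (fun x _ => hD 0 (by norm_num) x)
    (hint 4 le_rfl) (hint 1 (by norm_num))
  have ibp₂ := intervalIntegral.integral_mul_deriv_eq_deriv_mul (a := a) (b := b)
    (fun x _ => hD 2 (by norm_num) x) (fun x _ => hD 1 (by norm_num) x)
    (hint 3 (by norm_num)) (hint 2 (by norm_num))
  simp only [iteratedDeriv_zero, iteratedDeriv_one, zero_add, Nat.reduceAdd,
    h1a, h1b, h3a, h3b, zero_mul, mul_zero, sub_zero, zero_sub] at ibp₁ ibp₂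
  simp only [sq, ibp₂, ibp₁, neg_neg]

theorem eigenvalue_neg {lam : ℝ} (hu : ContDiff ℝ 4 u) (hab : a < b)
    (heig : ∀ x ∈ Icc a b, iteratedDeriv 4 u x = -lam * u x)
    (h1a : deriv u a = 0) (h1b : deriv u b = 0)
    (h3a : iteratedDeriv 3 u a = 0) (h3b : iteratedDeriv 3 u b = 0)
    (hne : ∃ x ∈ Icc a b, u x ≠ 0) (hlam : lam ≠ 0) : lam < 0 := by
  have hsq_pos : 0 < ∫ x in a..b, u x ^ 2 := by
    obtain ⟨c, hc, huc⟩ := hne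
    exact intervalIntegral.integral_pos hab (hu.continuous.pow 2).continuousOn
      (fun x _ => sq_nonneg _) ⟨c, hc, by positivity⟩
  have henergy : -lam * ∫ x in a..b, u x ^ 2 = ∫ x in a..b, iteratedDeriv 2 u x ^ 2 := by
    rw [← integral_iteratedDeriv_four_mul_self hu h1a h1b h3a h3b,
      ← intervalIntegral.integral_const_mul]
    refine intervalIntegral.integral_congr fun x hx => ?_
    rw [uIcc_of_le hab.le] at hx
    simp only [heig x hx]
    ring
  have hnonneg : 0 ≤ -lam * ∫ x in a..b, u x ^ 2 :=
    henergy ▸ intervalIntegral.integral_nonneg hab.le fun x _ => sq_nonneg _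
  exact lt_of_le_of_ne (by linarith [nonneg_of_mul_nonneg_left hnonneg hsq_pos]) hlam

theorem iteratedDeriv_three_eq_neg_sq_mul_iteratedDeriv_one {k : ℝ} (hu : ContDiff ℝ 4 u)
    (heig : ∀ x ∈ Icc a b, iteratedDeriv 4 u x = k ^ 4 * u x)
    (h1a : deriv u a = 0) (h1b : deriv u b = 0)
    (h3a : iteratedDeriv 3 u a = 0) (h3b : iteratedDeriv 3 u b = 0) :
    ∀ x ∈ Icc a b, iteratedDeriv 3 u x = -k ^ 2 * iteratedDeriv 1 u x := by
  have hD : ∀ n < 4, ∀ x, HasDerivAt (iteratedDeriv n u) (iteratedDeriv (n + 1) u x) x :=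
    fun n hn => hasDerivAt_iteratedDeriv hu (by exact_mod_cast hn)
  have hθ : ∀ x, HasDerivAt (fun y => k * y) k x := fun x => by
    simpa using (hasDerivAt_id x).const_mul k
  have hp := eq_zero_of_dirichlet_of_pos_solution (q := fun _ => k ^ 2)
    (f := fun x => iteratedDeriv 3 u x + k ^ 2 * iteratedDeriv 1 u x)
    (f' := fun x => k ^ 4 * u x + k ^ 2 * iteratedDeriv 2 u x)
    (φ := fun x => cosh (k * x)) (φ' := fun x => k * sinh (k * x))
    (fun x hx => ((hD 3 (by norm_num) x).add
      ((hD 1 (by norm_num) x).const_mul (k ^ 2))).congr_deriv (by rw [heig x hx]))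
    (fun x _ => (((hD 0 (by norm_num) x).const_mul (k ^ 4)).add
      ((hD 2 (by norm_num) x).const_mul (k ^ 2))).congr_deriv
        (by simp only [zero_add, Nat.reduceAdd]; ring))
    (fun x _ => (hθ x).cosh.congr_deriv (by ring))
    (fun x _ => ((hθ x).sinh.const_mul k).congr_deriv (by ring))
    (fun x _ => cosh_pos _)
    (by simp [iteratedDeriv_one, h1a, h3a]) (by simp [iteratedDeriv_one, h1b, h3b])
  intro x hx
  linear_combination hp x hx

theorem eq_zero_of_deriv_eq_zero {μ : ℝ} (hu : Differentiable ℝ u) (hab : a < b)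
    (hμ : μ ≠ 0) (heig : ∀ x ∈ Icc a b, iteratedDeriv 4 u x = μ * u x)
    (h1 : ∀ x ∈ Icc a b, deriv u x = 0) : ∀ x ∈ Icc a b, u x = 0 := by
  have hconst := eq_of_hasDerivAt_zero_on_Icc fun x hx => h1 x hx ▸ (hu x).hasDerivAt
  have hm : (a + b) / 2 ∈ Ioo a b := ⟨by linarith, by linarith⟩
  have hloc : u =ᶠ[nhds ((a + b) / 2)] fun _ => u a :=
    Filter.eventually_of_mem (Ioo_mem_nhds hm.1 hm.2) fun x hx =>
      hconst x (Ioo_subset_Icc_self hx)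
  have hua : u a = 0 := by
    have h := heig _ (Ioo_subset_Icc_self hm)
    rw [hloc.iteratedDeriv_eq, iteratedDeriv_const, hconst _ (Ioo_subset_Icc_self hm)] at h
    simpa [hμ] using h.symm
  intro x hx
  rw [hconst x hx, hua]

theorem pi_le_mul_of_iteratedDeriv_four_eq {k : ℝ} (hu : ContDiff ℝ 4 u) (hab : a < b)
    (hk : 0 < k) (heig : ∀ x ∈ Icc a b, iteratedDeriv 4 u x = k ^ 4 * u x)
    (h1a : deriv u a = 0) (h1b : deriv u b = 0)
    (h3a : iteratedDeriv 3 u a = 0) (h3b : iteratedDeriv 3 u b = 0)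
    (hne : ∃ x ∈ Icc a b, u x ≠ 0) : π ≤ k * (b - a) := by
  by_contra! hlt
  have h3 := iteratedDeriv_three_eq_neg_sq_mul_iteratedDeriv_one hu heig h1a h1b h3a h3b
  have h1 := eq_zero_of_dirichlet_of_mul_lt_pi hk.le hlt
    (fun x _ => hasDerivAt_iteratedDeriv hu (n := 1) (by norm_num) x)
    (fun x hx => h3 x hx ▸ hasDerivAt_iteratedDeriv hu (n := 2) (by norm_num) x)
    (by rwa [iteratedDeriv_one]) (by rwa [iteratedDeriv_one])
  obtain ⟨x, hx, hux⟩ := hne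
  exact hux (eq_zero_of_deriv_eq_zero (hu.differentiable (by norm_num)) hab (by positivity)
    heig (by simpa only [iteratedDeriv_one] using h1) x hx)

theorem eigenvalue_le_neg_pi_div_pow_four {lam : ℝ} (hu : ContDiff ℝ 4 u) (hab : a < b)
    (heig : ∀ x ∈ Icc a b, iteratedDeriv 4 u x = -lam * u x)
    (h1a : deriv u a = 0) (h1b : deriv u b = 0)
    (h3a : iteratedDeriv 3 u a = 0) (h3b : iteratedDeriv 3 u b = 0)
    (hne : ∃ x ∈ Icc a b, u x ≠ 0) (hlam : lam ≠ 0) : lam ≤ -(π / (b - a)) ^ 4 := by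
  have hneg : 0 < -lam := neg_pos.2 (eigenvalue_neg hu hab heig h1a h1b h3a h3b hne hlam)
  set k := √√(-lam)
  have hk4 : k ^ 4 = -lam := by
    rw [show k ^ 4 = (k ^ 2) ^ 2 by ring, sq_sqrt (sqrt_nonneg _), sq_sqrt hneg.le]
  have hpi := pi_le_mul_of_iteratedDeriv_four_eq (k := k) hu hab (by positivity)
    (fun x hx => by rw [hk4, heig x hx]) h1a h1b h3a h3b hne
  have hk : π / (b - a) ≤ k := (div_le_iff₀ (by linarith)).2 hpi
  linarith [pow_le_pow_left₀ (by positivity) hk 4]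

end Hyperdiffusion

/-- Spectral gap for the insulated hyperdiffusion operator `u ↦ -u''''` on
`(-1/2, 1/2)`: if `u` is a nonzero `C⁴` function with `u'''' = -λ u`,
`u'(±1/2) = u'''(±1/2) = 0` and `λ ≠ 0`, then `λ ≤ -π⁴`. -/
theorem stmt8 (u : ℝ → ℝ) (lam : ℝ) (hu : ContDiff ℝ 4 u)
    (heig : ∀ ξ ∈ Set.Icc (-(1/2) : ℝ) (1/2), iteratedDeriv 4 u ξ = -lam * u ξ)
    (hb1 : deriv u (1/2) = 0) (hb2 : deriv u (-(1/2)) = 0)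
    (hb3 : iteratedDeriv 3 u (1/2) = 0) (hb4 : iteratedDeriv 3 u (-(1/2)) = 0)
    (hne : ∃ ξ ∈ Set.Icc (-(1/2) : ℝ) (1/2), u ξ ≠ 0)
    (hlam : lam ≠ 0) :
    lam ≤ -π ^ 4 := by
  have h := eigenvalue_le_neg_pi_div_pow_four hu (by norm_num) heig hb2 hb1 hb4 hb3 hne hlam
  norm_num at h
  exact h
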